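/- Let $c_1', c_2', b$ be integers with $c_1' \ge 0$, $c_2' \ge 0$, $b \ge c_1' + 1$. Define real functions $f(\beta) = -\beta^2 + (2b - c_1')\beta + 2bc_1' - ((c_1')^2 - c_2')$ and $g(\beta) = f(\beta) - 2\beta - 2c_1'$. Then there exists a positive integer $\beta_0$ with $g(\beta_0) < 0 < f(\beta_0)$. -/

import Mathlib

/-!
Both `f` and `g` are downward parabolas with `f (x + 1) = g x + (2b + c₁' - 1)`, and
`g 0 = c₁'(2b - c₁' - 2) + c₂' ≥ 0` while `g` is negative far out. Walking along the naturals,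
`g` therefore changes sign between some `n` and `n + 1`; at `β₀ = n + 1` we get `g β₀ < 0`, and
`f β₀ = g n + (2b + c₁' - 1) > 0`.
-/

theorem exists_nat_neg_sq_add_mul_add_neg (A C : ℝ) : ∃ n : ℕ, -(n : ℝ) ^ 2 + A * n + C < 0 := by
  obtain ⟨n, hn⟩ := exists_nat_gt (|A| + |C|)
  refine ⟨n, ?_⟩
  have hn1 : (1 : ℝ) ≤ n := by
    have : (0 : ℕ) < n := by exact_mod_cast (add_nonneg (abs_nonneg A) (abs_nonneg C)).trans_lt hn
    exact_mod_cast this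
  nlinarith [le_abs_self A, le_abs_self C, abs_nonneg C]

/-- Prop 3.12: with `f(β) = -β² + (2b-c₁')β + 2bc₁' - (c₁'² - c₂')`
and `g(β) = f(β) - 2β - 2c₁'`, there is a positive integer `β₀` with
`g(β₀) < 0 < f(β₀)`. -/
theorem stmt11 (c1' c2' b : ℤ) (h1 : 0 ≤ c1') (h2 : 0 ≤ c2') (hb : c1' + 1 ≤ b)
    (f g : ℝ → ℝ)
    (hf : ∀ β, f β = -β ^ 2 + (2 * b - c1') * β + 2 * b * c1' - ((c1' : ℝ) ^ 2 - c2'))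
    (hg : ∀ β, g β = f β - 2 * β - 2 * c1') :
    ∃ β₀ : ℤ, 0 < β₀ ∧ g β₀ < 0 ∧ 0 < f β₀ := by
  have h1' : (0 : ℝ) ≤ c1' := by exact_mod_cast h1
  have h2' : (0 : ℝ) ≤ c2' := by exact_mod_cast h2
  have hb' : (c1' : ℝ) + 1 ≤ b := by exact_mod_cast hb
  have hshift : ∀ x, f (x + 1) = g x + (2 * b + c1' - 1) := fun x => by
    rw [hg, hf, hf]; ring
  have hg0 : ¬ g (0 : ℕ) < 0 := by
    rw [hg, hf]; push_cast; nlinarith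
  have hg_neg : ∃ n : ℕ, g n < 0 := by
    obtain ⟨n, hn⟩ := exists_nat_neg_sq_add_mul_add_neg (2 * b - c1' - 2)
      (2 * b * c1' - c1' ^ 2 + c2' - 2 * c1')
    exact ⟨n, by rw [hg, hf]; linarith⟩
  obtain ⟨n, hgn, hgn1⟩ := Nat.exists_not_and_succ_of_not_zero_of_exists hg0 hg_neg
  refine ⟨n + 1, by omega, by exact_mod_cast hgn1, ?_⟩
  push_cast
  rw [hshift]
  linarith [not_lt.mp hgn]
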